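/- There exist a set X of irrational numbers of size 2^ω and a zero-dimensional first countable topology τ on X refining the Euclidean topology such that X = Y ∪ Z where τ agrees with the Euclidean topology on both Y and Z, and (X, τ) has an irreducible base. Consequently χ(X) = nw(X) = ω while w(X) = 2^ω. -/

import Mathlib

open TopologicalSpace Cardinal Set

universe u

section Defs

variable {X : Type u} [TopologicalSpace X]

/-- `B` is a neighbourhood base of `x`: members are open sets containing `x`,
and every open set containing `x` contains a member of `B`. -/
def NbhdBasisAt (B : Set (Set X)) (x : X) : Prop :=
  (∀ U ∈ B, IsOpen U ∧ x ∈ U) ∧ ∀ V : Set X, IsOpen V → x ∈ V → ∃ U ∈ B, U ⊆ V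

/-- The family `F` contains a neighbourhood base of `x`. -/
def ContainsNbhdBasisAt (F : Set (Set X)) (x : X) : Prop :=
  ∀ V : Set X, IsOpen V → x ∈ V → ∃ U ∈ F, x ∈ U ∧ U ⊆ V

/-- Property (*) of a decomposition. -/
def StarProperty (𝒲 : X → Set (Set X)) : Prop :=
  ∀ x y : X, x ≠ y → ∀ U ∈ 𝒲 x, ∀ V ∈ 𝒲 y, x ∈ V → y ∈ U → (V \ U).Nonempty

/-- `𝒰` is an irreducible decomposition of a base of `X`. -/
def IsIrreducibleDecomp (𝒰 : X → Set (Set X)) : Prop :=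
  IsTopologicalBasis (⋃ x, 𝒰 x) ∧ (∀ x, NbhdBasisAt (𝒰 x) x) ∧
    ∀ x : X, ¬ ContainsNbhdBasisAt (⋃ y ∈ {y : X | y ≠ x}, 𝒰 y) x

def HasIrreducibleBase (X : Type u) [TopologicalSpace X] : Prop :=
  ∃ 𝒰 : X → Set (Set X), IsIrreducibleDecomp 𝒰

/-- `f` is a neighbourhood assignment on `Y`. -/
def IsNbhdAssignment (Y : Set X) (f : X → Set X) : Prop :=
  ∀ y ∈ Y, IsOpen (f y) ∧ y ∈ f y

/-- `D_N^f = { y ∈ Y : y ∈ N ⊆ f y }`. -/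
def Dset (Y : Set X) (f : X → Set X) (N : Set X) : Set X :=
  {y | y ∈ Y ∧ y ∈ N ∧ N ⊆ f y}

/-- `Y` is weakly separated (as a subspace of `X`). -/
def WeaklySeparatedSub (Y : Set X) : Prop :=
  ∃ f : X → Set X, IsNbhdAssignment Y f ∧
    ∀ y ∈ Y, ∀ z ∈ Y, y ≠ z → y ∉ f z ∨ z ∉ f y

/-- `Z` is pseudo weakly separated: it contains a weakly separated subspace of the
same cardinality. -/
def PseudoWeaklySeparated (Z : Set X) : Prop :=
  ∃ W ⊆ Z, #W = #Z ∧ WeaklySeparatedSub W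

/-- The weight of a space: least cardinality of a base. -/
noncomputable def weight (X : Type u) [TopologicalSpace X] : Cardinal.{u} :=
  sInf {c | ∃ B : Set (Set X), IsTopologicalBasis B ∧ c = #B}

/-- The character of `X` at `x`: least cardinality of a neighbourhood base at `x`. -/
noncomputable def charAt (x : X) : Cardinal.{u} :=
  sInf {c | ∃ B : Set (Set X), NbhdBasisAt B x ∧ c = #B}

/-- The character of `X`. -/
noncomputable def character (X : Type u) [TopologicalSpace X] : Cardinal.{u} :=
  ⨆ x : X, charAt x

/-- `N` is a network of `X`. -/
def IsNetwork (N : Set (Set X)) : Prop :=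
  ∀ x : X, ∀ U : Set X, IsOpen U → x ∈ U → ∃ M ∈ N, x ∈ M ∧ M ⊆ U

/-- The net weight of `X`: least cardinality of a network. -/
noncomputable def netWeight (X : Type u) [TopologicalSpace X] : Cardinal.{u} :=
  sInf {c | ∃ N : Set (Set X), IsNetwork N ∧ c = #N}

/-- Tkačenko's cardinal function `R`. -/
noncomputable def Rinv (X : Type u) [TopologicalSpace X] : Cardinal.{u} :=
  sSup {c | ∃ Y : Set X, WeaklySeparatedSub Y ∧ c = #Y}

/-- `S` is right-separated: it carries a well-ordering in which every point has an
open neighbourhood avoiding all later points of `S`. -/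
def RightSeparated (S : Set X) : Prop :=
  ∃ r : S → S → Prop, IsWellOrder S r ∧
    ∀ x : S, ∃ U : Set X, IsOpen U ∧ (x : X) ∈ U ∧ ∀ y : S, r x y → (y : X) ∉ U

end Defs

/-!
Since the intervals `I y n` have rational endpoints and accumulate only at `y`, an irrational point
other than `y` outside `J y` is outside its closure. Hence the basic sets are clopen, and a basic
neighbourhood of `y ∈ Y` containing another `y' ∈ Y` also contains points of `Z ∩ J y'`. This
yields property (*) for the neighbourhood bases at points of `Y` (at points of `Z` one removes the
earlier points of an enumeration of `Z`), and it shows that a member of any base is a small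
neighbourhood of only countably many points of `Y`, so `w = 𝔠`. Both `Y` and `Z` keep their second
countable Euclidean topology, so `nw = ω`; first countability and the absence of isolated points
give `χ = ω`.
-/

open Topology Filter

section

variable {X : Type u} [TopologicalSpace X]

theorem nbhdBasisAt_opens (x : X) : NbhdBasisAt {U | IsOpen U ∧ x ∈ U} x :=
  ⟨fun _ hU => hU, fun V hV hxV => ⟨V, ⟨hV, hxV⟩, subset_rfl⟩⟩

theorem isTopologicalBasis_iUnion_of_nbhdBasisAt {𝒰 : X → Set (Set X)}
    (h𝒰 : ∀ x, NbhdBasisAt (𝒰 x) x) : IsTopologicalBasis (⋃ x, 𝒰 x) := by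
  refine isTopologicalBasis_of_isOpen_of_nhds ?_ fun x V hxV hV => ?_
  · rintro U ⟨_, ⟨x, rfl⟩, hU⟩
    exact ((h𝒰 x).1 U hU).1
  · obtain ⟨U, hU, hUV⟩ := (h𝒰 x).2 V hV hxV
    exact ⟨U, mem_iUnion.2 ⟨x, hU⟩, ((h𝒰 x).1 U hU).2, hUV⟩

theorem StarProperty.isIrreducibleDecomp {𝒰 : X → Set (Set X)} (hstar : StarProperty 𝒰)
    (h𝒰 : ∀ x, NbhdBasisAt (𝒰 x) x) : IsIrreducibleDecomp 𝒰 := by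
  refine ⟨isTopologicalBasis_iUnion_of_nbhdBasisAt h𝒰, h𝒰, fun x hx => ?_⟩
  obtain ⟨V, hV, -⟩ := (h𝒰 x).2 Set.univ isOpen_univ (mem_univ x)
  obtain ⟨hVo, hxV⟩ := (h𝒰 x).1 V hV
  obtain ⟨U, hU, hxU, hUV⟩ := hx V hVo hxV
  obtain ⟨x', hx'x, hU'⟩ : ∃ x', x' ≠ x ∧ U ∈ 𝒰 x' := by simpa using hU
  obtain ⟨w, hwU, hwV⟩ := hstar x x' hx'x.symm V hV U hU' hxU (hUV ((h𝒰 x').1 U hU').2)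
  exact hwV (hUV hwU)

theorem charAt_le_mk {B : Set (Set X)} {x : X} (hB : NbhdBasisAt B x) : charAt x ≤ #B := by
  unfold charAt
  exact csInf_le' ⟨B, hB, rfl⟩

theorem charAt_le_aleph0 [FirstCountableTopology X] (x : X) : charAt x ≤ ℵ₀ := by
  obtain ⟨s, hs⟩ := (𝓝 x).exists_antitone_basis
  have hB : NbhdBasisAt (range fun n => interior (s n)) x := by
    refine ⟨?_, fun V hV hxV => ?_⟩
    · rintro _ ⟨n, rfl⟩
      exact ⟨isOpen_interior, mem_interior_iff_mem_nhds.2 (hs.1.mem_of_mem trivial)⟩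
    · obtain ⟨n, -, hn⟩ := hs.1.mem_iff.1 (hV.mem_nhds hxV)
      exact ⟨_, ⟨n, rfl⟩, interior_subset.trans hn⟩
  exact (charAt_le_mk hB).trans (mk_le_aleph0_iff.2 (countable_range _).to_subtype)

theorem aleph0_le_charAt [T1Space X] (x : X) [(𝓝[≠] x).NeBot] : ℵ₀ ≤ charAt x := by
  refine le_csInf ⟨_, _, nbhdBasisAt_opens x, rfl⟩ ?_
  rintro _ ⟨B, hB, rfl⟩
  by_contra hlt
  have hfin : B.Finite := lt_aleph0_iff_set_finite.1 (not_le.1 hlt)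
  have hW : ⋂₀ B ∈ 𝓝 x := (hfin.isOpen_sInter fun U hU => (hB.1 U hU).1).mem_nhds
    (mem_sInter.2 fun U hU => (hB.1 U hU).2)
  have hW' : ⋂₀ B ∩ {x}ᶜ ∈ 𝓝[≠] x :=
    inter_mem (mem_nhdsWithin_of_mem_nhds hW) self_mem_nhdsWithin
  obtain ⟨w, hwW, hwx⟩ := Filter.nonempty_of_mem hW'
  obtain ⟨U, hU, hUw⟩ := hB.2 {w}ᶜ isOpen_compl_singleton (Ne.symm hwx)
  exact hUw (mem_sInter.1 hwW U hU) rfl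

theorem character_eq_aleph0 [Nonempty X] [FirstCountableTopology X] [T1Space X]
    [∀ x : X, (𝓝[≠] x).NeBot] : character X = ℵ₀ := by
  simp only [character, fun x : X => le_antisymm (charAt_le_aleph0 x) (aleph0_le_charAt x),
    ciSup_const]

theorem netWeight_le_mk {N : Set (Set X)} (hN : IsNetwork N) : netWeight X ≤ #N := by
  unfold netWeight
  exact csInf_le' ⟨N, hN, rfl⟩

theorem netWeight_le_aleph0_of_union {Y Z : Set X} (hYZ : Y ∪ Z = Set.univ)
    [SecondCountableTopology Y] [SecondCountableTopology Z] : netWeight X ≤ ℵ₀ := by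
  set N := image Subtype.val '' countableBasis Y ∪ image Subtype.val '' countableBasis Z
  have hN : IsNetwork N := by
    intro x U hU hxU
    have hx : x ∈ Y ∪ Z := hYZ ▸ mem_univ x
    rcases hx with hx | hx
    · obtain ⟨b, hb, hxb, hbU⟩ := (isBasis_countableBasis Y).exists_subset_of_mem_open
        (a := ⟨x, hx⟩) hxU (hU.preimage continuous_subtype_val)
      exact ⟨_, Or.inl ⟨b, hb, rfl⟩, ⟨_, hxb, rfl⟩, image_subset_iff.2 hbU⟩
    · obtain ⟨b, hb, hxb, hbU⟩ := (isBasis_countableBasis Z).exists_subset_of_mem_open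
        (a := ⟨x, hx⟩) hxU (hU.preimage continuous_subtype_val)
      exact ⟨_, Or.inr ⟨b, hb, rfl⟩, ⟨_, hxb, rfl⟩, image_subset_iff.2 hbU⟩
  have hNc : N.Countable :=
    ((countable_countableBasis Y).image _).union ((countable_countableBasis Z).image _)
  exact (netWeight_le_mk hN).trans (mk_le_aleph0_iff.2 hNc.to_subtype)

theorem aleph0_le_netWeight [T1Space X] [Infinite X] : ℵ₀ ≤ netWeight X := by
  unfold netWeight
  refine le_csInf ⟨_, {U | IsOpen U}, fun x U hU hxU => ⟨U, hU, hxU, subset_rfl⟩, rfl⟩ ?_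
  rintro _ ⟨N, hN, rfl⟩
  by_contra hlt
  have : Finite N := lt_aleph0_iff_finite.1 (not_le.1 hlt)
  have hinj : Function.Injective fun x : X => {M : N | x ∈ (M : Set X)} := by
    intro x y hxy
    by_contra hne
    obtain ⟨M, hMN, hxM, hMy⟩ := hN x {y}ᶜ isOpen_compl_singleton hne
    have hyM : y ∈ M := (Set.ext_iff.1 hxy ⟨M, hMN⟩).1 hxM
    exact hMy hyM rfl
  have := Finite.of_injective _ hinj
  exact not_finite X

theorem weight_le_mk {B : Set (Set X)} (hB : IsTopologicalBasis B) : weight X ≤ #B := by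
  unfold weight
  exact csInf_le' ⟨B, hB, rfl⟩

theorem le_weight {c : Cardinal} (h : ∀ B : Set (Set X), IsTopologicalBasis B → c ≤ #B) :
    c ≤ weight X :=
  le_csInf ⟨_, _, isTopologicalBasis_opens, rfl⟩ fun _ ⟨B, hB, hc⟩ => hc ▸ h B hB

end

theorem induced_coe_generateFrom_eq {α : Type*} {g : Set (Set α)} {σ : TopologicalSpace α}
    {S : Set α} (hle : generateFrom g ≤ σ)
    (h : ∀ G ∈ g, ∃ O, IsOpen[σ] O ∧ ((↑) : S → α) ⁻¹' O = (↑) ⁻¹' G) :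
    induced ((↑) : S → α) (generateFrom g) = induced (↑) σ := by
  refine le_antisymm (induced_mono hle) ?_
  rw [induced_generateFrom_eq]
  refine le_generateFrom ?_
  rintro _ ⟨G, hG, rfl⟩
  obtain ⟨O, hO, hOG⟩ := h G hG
  exact ⟨O, hO, hOG⟩

theorem exists_isClosed_irrational_mk_eq_continuum :
    ∃ K : Set ℝ, IsClosed K ∧ (∀ x ∈ K, Irrational x) ∧ #K = 𝔠 := by
  have hℚ := countable_range ((↑) : ℚ → ℝ)
  have hpos : 0 < MeasureTheory.volume (range ((↑) : ℚ → ℝ))ᶜ := by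
    rw [MeasureTheory.measure_congr
      (MeasureTheory.ae_eq_univ.2 (by rw [compl_compl]; exact hℚ.measure_zero _))]
    simp
  -- a compact set of irrationals of positive measure is uncountable, so contains a Cantor set
  obtain ⟨C, hCirr, hC, hCpos⟩ := hℚ.measurableSet.compl.exists_lt_isCompact hpos
  obtain ⟨f, hfC, hf, hfinj⟩ := hC.isClosed.exists_nat_bool_injection_of_not_countable
    fun h => hCpos.ne' (h.measure_zero _)
  refine ⟨range f, (isCompact_range hf).isClosed, fun x hx => hCirr (hfC hx), ?_⟩
  simp [mk_range_eq f hfinj]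

theorem exists_rat_Ioo_mem_subset {U : Set ℝ} (hU : IsOpen U) {x : ℝ} (hx : x ∈ U) :
    ∃ a b : ℚ, x ∈ Ioo (a : ℝ) b ∧ Ioo (a : ℝ) b ⊆ U := by
  obtain ⟨_, hI, hxI, hIU⟩ := Real.isTopologicalBasis_Ioo_rat.exists_subset_of_mem_open hx hU
  simp only [mem_iUnion, mem_singleton_iff] at hI
  obtain ⟨a, b, -, rfl⟩ := hI
  exact ⟨a, b, hxI, hIU⟩

theorem Irrational.mem_Ioo_of_mem_closure {w : ℝ} (hw : Irrational w) {a b : ℚ}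
    (h : w ∈ closure (Ioo (a : ℝ) b)) : w ∈ Ioo (a : ℝ) b := by
  obtain ⟨ha, hb⟩ := closure_minimal Ioo_subset_Icc_self isClosed_Icc h
  exact ⟨ha.lt_of_ne (hw.ne_rat a).symm, hb.lt_of_ne (hw.ne_rat b)⟩

namespace IrreducibleBaseExample

def Y : Set ℝ := exists_isClosed_irrational_mk_eq_continuum.choose

theorem isClosed_Y : IsClosed Y := exists_isClosed_irrational_mk_eq_continuum.choose_spec.1

theorem irrational_of_mem_Y {y : ℝ} (hy : y ∈ Y) : Irrational y :=
  exists_isClosed_irrational_mk_eq_continuum.choose_spec.2.1 y hy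

theorem mk_Y : #Y = 𝔠 := exists_isClosed_irrational_mk_eq_continuum.choose_spec.2.2

theorem ratCast_notMem_Y (q : ℚ) : (q : ℝ) ∉ Y := fun h => irrational_of_mem_Y h ⟨q, rfl⟩

theorem exists_rat_Ioo_subset_diff_Y {s : Set ℝ} (hs : IsOpen s) (hne : s.Nonempty) :
    ∃ a b : ℚ, (a : ℝ) < b ∧ Ioo (a : ℝ) b ⊆ s \ Y := by
  obtain ⟨q, hq⟩ := Rat.denseRange_cast.exists_mem_open hs hne
  obtain ⟨a, b, hqab, hab⟩ :=
    exists_rat_Ioo_mem_subset (hs.sdiff isClosed_Y) ⟨hq, ratCast_notMem_Y q⟩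
  exact ⟨a, b, hqab.1.trans hqab.2, hab⟩

def Z : Set ℝ := range (fun q : ℚ => (q : ℝ) + √2) \ Y

theorem countable_Z : Z.Countable := (countable_range _).mono sdiff_subset

theorem dense_Z : Dense Z := by
  refine dense_iff_inter_open.2 fun U hU hne => ?_
  obtain ⟨a, b, hab, habU⟩ := exists_rat_Ioo_subset_diff_Y hU hne
  obtain ⟨q, hq⟩ := exists_rat_btwn (sub_lt_sub_right hab √2)
  have hq' : (q : ℝ) + √2 ∈ Ioo (a : ℝ) b := ⟨by linarith, by linarith⟩
  obtain ⟨hqU, hqY⟩ := habU hq'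
  exact ⟨_, hqU, ⟨q, rfl⟩, hqY⟩

theorem exists_rat_Ioo_subset_gap (r : ℝ) (n : ℕ) : ∃ p : ℚ × ℚ, (p.1 : ℝ) < p.2 ∧
    Ioo (p.1 : ℝ) p.2 ⊆ Ioo (r + 1 / (n + 2)) (r + 1 / (n + 1)) \ Y := by
  have : r + 1 / (n + 2) < r + 1 / (n + 1) := by gcongr; linarith
  obtain ⟨a, b, hab, h⟩ := exists_rat_Ioo_subset_diff_Y isOpen_Ioo (nonempty_Ioo.2 this)
  exact ⟨(a, b), hab, h⟩

/-- The interval `I^r_n`. -/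
def I (r : ℝ) (n : ℕ) : Set ℝ :=
  Ioo ((exists_rat_Ioo_subset_gap r n).choose.1 : ℝ) (exists_rat_Ioo_subset_gap r n).choose.2

theorem nonempty_I (r : ℝ) (n : ℕ) : (I r n).Nonempty :=
  nonempty_Ioo.2 (exists_rat_Ioo_subset_gap r n).choose_spec.1

theorem I_subset (r : ℝ) (n : ℕ) : I r n ⊆ Ioo (r + 1 / (n + 2)) (r + 1 / (n + 1)) \ Y :=
  (exists_rat_Ioo_subset_gap r n).choose_spec.2

/-- `J r` is the paper's `J^r` for `r ∈ Y`, and empty otherwise. -/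
def J (r : ℝ) : Set ℝ := ⋃ (n : ℕ) (_ : r ∈ Y), I r n

theorem mem_J {r w : ℝ} : w ∈ J r ↔ ∃ n, r ∈ Y ∧ w ∈ I r n := by
  simp [J]

theorem J_eq_empty {r : ℝ} (hr : r ∉ Y) : J r = ∅ := by
  simp [J, hr]

theorem isOpen_J (r : ℝ) : IsOpen (J r) :=
  isOpen_iUnion fun _ => isOpen_iUnion fun _ => isOpen_Ioo

theorem J_subset_compl_Y (r : ℝ) : J r ⊆ Yᶜ := fun _ hw =>
  let ⟨n, _, hw⟩ := mem_J.1 hw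
  (I_subset r n hw).2

theorem J_subset_Ioi (r : ℝ) : J r ⊆ Ioi r := by
  intro w hw
  obtain ⟨n, -, hw⟩ := mem_J.1 hw
  have := (I_subset r n hw).1.1
  have : (0 : ℝ) < 1 / (n + 2) := by positivity
  exact show r < w by linarith

theorem notMem_J_self (r : ℝ) : r ∉ J r := fun h => lt_irrefl r (J_subset_Ioi r h)

/-- For `ε > 0` only finitely many of the intervals `I r n` meet `Ioi (r + ε)`, and their
endpoints are rational. -/
theorem mem_J_of_mem_closure {r w : ℝ} (hw : Irrational w) (hwr : w ≠ r)
    (h : w ∈ closure (J r)) : w ∈ J r := by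
  have hr : r ∈ Y := by
    by_contra hr
    rw [J_eq_empty hr, closure_empty] at h
    exact h
  have hrw : r < w := by
    have := closure_mono (J_subset_Ioi r) h
    rw [closure_Ioi] at this
    exact lt_of_le_of_ne this hwr.symm
  obtain ⟨N, hN⟩ := exists_nat_one_div_lt (sub_pos.2 hrw)
  have hfin : Ioi (r + 1 / (N + 1)) ∩ J r ⊆ ⋃ n ∈ Finset.range N, I r n := by
    rintro x ⟨hx, hxJ⟩
    obtain ⟨n, -, hxI⟩ := mem_J.1 hxJ
    have hlt : (1 : ℝ) / (N + 1) < 1 / (n + 1) := by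
      linarith [(I_subset r n hxI).1.2, mem_Ioi.1 hx]
    rw [one_div_lt_one_div (by positivity) (by positivity)] at hlt
    exact mem_biUnion (Finset.mem_range.2 (by exact_mod_cast (by linarith : (n : ℝ) < N))) hxI
  have hcl := closure_mono hfin (isOpen_Ioi.inter_closure ⟨mem_Ioi.2 (by linarith), h⟩)
  rw [Finset.closure_biUnion] at hcl
  obtain ⟨n, -, hn⟩ := mem_iUnion₂.1 hcl
  exact mem_J.2 ⟨n, hr, hw.mem_Ioo_of_mem_closure hn⟩

theorem mem_closure_J_inter_Z {r : ℝ} (hr : r ∈ Y) : r ∈ closure (J r ∩ Z) := by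
  refine Metric.mem_closure_iff.2 fun ε hε => ?_
  obtain ⟨n, hn⟩ := exists_nat_one_div_lt hε
  obtain ⟨z, hzI, hzZ⟩ := dense_Z.inter_open_nonempty _ isOpen_Ioo (nonempty_I r n)
  have hz := (I_subset r n hzI).1
  have : (0 : ℝ) < 1 / (n + 2) := by positivity
  refine ⟨z, ⟨mem_J.2 ⟨n, hr, hzI⟩, hzZ⟩, ?_⟩
  rw [Real.dist_eq, abs_sub_comm, abs_of_pos (by linarith [hz.1])]
  linarith [hz.2]

theorem exists_mem_Z_inter_J {r s : ℝ} {U : Set ℝ} (hU : IsOpen U) (hsU : s ∈ U)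
    (hs : s ∈ Y) (hsr : s ≠ r) (hsJ : s ∉ J r) : ∃ z ∈ Z, z ∈ U \ J r ∧ z ∈ J s := by
  have hscl : s ∉ closure (J r) := fun h =>
    hsJ (mem_J_of_mem_closure (irrational_of_mem_Y hs) hsr h)
  obtain ⟨z, ⟨hzU, hzcl⟩, hzJ, hzZ⟩ :=
    mem_closure_iff.1 (mem_closure_J_inter_Z hs) _ (hU.sdiff isClosed_closure) ⟨hsU, hscl⟩
  exact ⟨z, hzZ, ⟨hzU, fun h => hzcl (subset_closure h)⟩, hzJ⟩

def X : Type := ↥(Y ∪ Z)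

def toReal : X → ℝ := Subtype.val

theorem toReal_injective : Function.Injective toReal := Subtype.val_injective

theorem toReal_mem (x : X) : toReal x ∈ Y ∪ Z := x.2

theorem irrational_toReal (x : X) : Irrational (toReal x) := by
  rcases toReal_mem x with h | ⟨⟨q, hq⟩, -⟩
  · exact irrational_of_mem_Y h
  · exact hq ▸ irrational_sqrt_two.ratCast_add q

def ofY {y : ℝ} (hy : y ∈ Y) : X := ⟨y, Or.inl hy⟩

def ofZ {z : ℝ} (hz : z ∈ Z) : X := ⟨z, Or.inr hz⟩

/-- For `r ∈ Y` this is the paper's basic neighbourhood `(U(r) \ J^r) ∩ X`; for `r ∉ Y` it is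
the Euclidean interval `(a, b) ∩ X`. -/
def box (a b : ℚ) (r : ℝ) : Set X := toReal ⁻¹' (Ioo (a : ℝ) b \ J r)

def boxes : Set (Set X) := range fun p : ℚ × ℚ × ℝ => box p.1 p.2.1 p.2.2

instance : TopologicalSpace X := generateFrom boxes

abbrev euclidean : TopologicalSpace X := induced toReal inferInstance

theorem isOpen_box (a b : ℚ) (r : ℝ) : IsOpen (box a b r) :=
  isOpen_generateFrom_of_mem ⟨(a, b, r), rfl⟩

theorem mem_box_self {x : X} {a b : ℚ} (h : toReal x ∈ Ioo (a : ℝ) b) :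
    x ∈ box a b (toReal x) :=
  ⟨h, notMem_J_self _⟩

theorem box_mono {a b a' b' : ℚ} (h : Ioo (a : ℝ) b ⊆ Ioo (a' : ℝ) b') (r : ℝ) :
    box a b r ⊆ box a' b' r :=
  preimage_mono (sdiff_subset_sdiff_left h)

theorem box_of_notMem_Y {r : ℝ} (hr : r ∉ Y) (a b : ℚ) :
    box a b r = toReal ⁻¹' Ioo (a : ℝ) b := by
  simp [box, J_eq_empty hr]

theorem exists_box_subset {x : X} {c d : ℚ} {r : ℝ} (hx : x ∈ box c d r) :
    ∃ a b : ℚ, toReal x ∈ Ioo (a : ℝ) b ∧ box a b (toReal x) ⊆ box c d r := by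
  obtain ⟨hxcd, hxJ⟩ := hx
  by_cases hxr : toReal x = r
  · exact ⟨c, d, hxcd, hxr ▸ subset_rfl⟩
  have hxcl : toReal x ∉ closure (J r) := fun h =>
    hxJ (mem_J_of_mem_closure (irrational_toReal x) hxr h)
  obtain ⟨a, b, hxab, hab⟩ :=
    exists_rat_Ioo_mem_subset (isOpen_Ioo.sdiff isClosed_closure) ⟨hxcd, hxcl⟩
  exact ⟨a, b, hxab, fun w hw => ⟨(hab hw.1).1, fun h => (hab hw.1).2 (subset_closure h)⟩⟩

theorem isTopologicalBasis_boxes : IsTopologicalBasis boxes := by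
  refine ⟨?_, sUnion_eq_univ_iff.2 fun x => ?_, rfl⟩
  · rintro _ ⟨⟨c, d, r⟩, rfl⟩ _ ⟨⟨c', d', r'⟩, rfl⟩ x ⟨hx, hx'⟩
    obtain ⟨a, b, hxab, hab⟩ := exists_box_subset hx
    obtain ⟨a', b', hxab', hab'⟩ := exists_box_subset hx'
    obtain ⟨a'', b'', hx'', h''⟩ :=
      exists_rat_Ioo_mem_subset (isOpen_Ioo.inter isOpen_Ioo) ⟨hxab, hxab'⟩
    exact ⟨_, ⟨(a'', b'', toReal x), rfl⟩, mem_box_self hx'',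
      subset_inter ((box_mono (fun t ht => (h'' ht).1) _).trans hab)
        ((box_mono (fun t ht => (h'' ht).2) _).trans hab')⟩
  · obtain ⟨a, b, hx, -⟩ := exists_rat_Ioo_mem_subset isOpen_univ (mem_univ (toReal x))
    exact ⟨_, ⟨(a, b, toReal x), rfl⟩, mem_box_self hx⟩

theorem hasBasis_nhds_box (x : X) :
    (𝓝 x).HasBasis (fun p : ℚ × ℚ => toReal x ∈ Ioo (p.1 : ℝ) p.2)
      fun p => box p.1 p.2 (toReal x) := by
  refine isTopologicalBasis_boxes.nhds_hasBasis.to_hasBasis ?_ fun p hp =>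
    ⟨_, ⟨⟨(p.1, p.2, toReal x), rfl⟩, mem_box_self hp⟩, subset_rfl⟩
  rintro _ ⟨⟨⟨c, d, r⟩, rfl⟩, hx⟩
  obtain ⟨a, b, hxab, hab⟩ := exists_box_subset hx
  exact ⟨(a, b), hxab, hab⟩

instance : FirstCountableTopology X :=
  ⟨fun x => (hasBasis_nhds_box x).isCountablyGenerated⟩

theorem continuous_toReal : Continuous toReal := by
  refine Real.isTopologicalBasis_Ioo_rat.continuous_iff.2 fun s hs => ?_
  simp only [mem_iUnion, mem_singleton_iff] at hs
  obtain ⟨a, b, -, rfl⟩ := hs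
  rw [← box_of_notMem_Y (ratCast_notMem_Y 0)]
  exact isOpen_box a b _

theorem le_euclidean : (inferInstance : TopologicalSpace X) ≤ euclidean :=
  continuous_iff_le_induced.1 continuous_toReal

instance : T2Space X := T2Space.of_injective_continuous toReal_injective continuous_toReal

theorem preimage_Ioo_eq_preimage_Icc (a b : ℚ) :
    toReal ⁻¹' Ioo (a : ℝ) b = toReal ⁻¹' Icc (a : ℝ) b := by
  ext x
  have hx := irrational_toReal x
  exact ⟨fun h => Ioo_subset_Icc_self h, fun ⟨ha, hb⟩ =>
    ⟨ha.lt_of_ne (hx.ne_rat a).symm, hb.lt_of_ne (hx.ne_rat b)⟩⟩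

theorem isClopen_box (a b : ℚ) (r : ℝ) : IsClopen (box a b r) := by
  refine ⟨?_, isOpen_box a b r⟩
  rw [box, preimage_sdiff, preimage_Ioo_eq_preimage_Icc]
  exact (isClosed_Icc.preimage continuous_toReal).sdiff ((isOpen_J r).preimage continuous_toReal)

instance (x : X) : (𝓝[≠] x).NeBot := by
  refine ((hasBasis_nhds_box x).inf_principal _).neBot_iff.2 fun {p} hp => ?_
  obtain ⟨z, hz, hzZ⟩ := dense_Z.inter_open_nonempty _ isOpen_Ioo (nonempty_Ioo.2 hp.1)
  refine ⟨ofZ hzZ, ⟨⟨hz.1, hz.2.trans hp.2⟩, fun h => ?_⟩, fun h => ?_⟩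
  · exact (J_subset_Ioi _ h).out.not_gt hz.2
  · exact hz.2.ne (congrArg toReal h)

theorem mk_X : #X = 𝔠 :=
  le_antisymm ((mk_set_le _).trans mk_real.le) (mk_Y ▸ mk_le_mk_of_subset subset_union_left)

instance : Infinite X := Cardinal.infinite_iff.2 (mk_X ▸ aleph0_le_continuum)

def YX : Set X := toReal ⁻¹' Y

def ZX : Set X := toReal ⁻¹' Z

theorem YX_union_ZX : YX ∪ ZX = Set.univ := eq_univ_of_forall toReal_mem

theorem induced_coe_YX : induced ((↑) : YX → X) inferInstance = induced (↑) euclidean := by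
  refine induced_coe_generateFrom_eq le_euclidean ?_
  rintro _ ⟨⟨a, b, r⟩, rfl⟩
  refine ⟨toReal ⁻¹' Ioo (a : ℝ) b, isOpen_induced isOpen_Ioo, ?_⟩
  ext ⟨x, hx⟩
  exact ⟨fun h => ⟨h, fun hJ => J_subset_compl_Y r hJ hx⟩, fun h => h.1⟩

theorem induced_coe_ZX : induced ((↑) : ZX → X) inferInstance = induced (↑) euclidean := by
  refine induced_coe_generateFrom_eq le_euclidean ?_
  rintro _ ⟨⟨a, b, r⟩, rfl⟩
  dsimp only
  refine ⟨toReal ⁻¹' (Ioo (a : ℝ) b \ closure (J r)),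
    isOpen_induced (isOpen_Ioo.sdiff isClosed_closure), ?_⟩
  ext ⟨x, hx⟩
  refine ⟨fun h => ⟨h.1, fun hJ => h.2 (subset_closure hJ)⟩,
    fun h => ⟨h.1, fun hJ => ?_⟩⟩
  refine h.2 (mem_J_of_mem_closure (irrational_toReal x) (fun hxr => ?_) hJ)
  rw [← hxr, J_eq_empty hx.2, closure_empty] at hJ
  exact hJ

theorem secondCountableTopology_of_induced_coe_eq {S : Set X}
    (h : induced ((↑) : S → X) inferInstance = induced (↑) euclidean) :
    SecondCountableTopology S := by
  rw [show (instTopologicalSpaceSubtype : TopologicalSpace S) = _ from h, induced_compose]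
  exact secondCountableTopology_induced _ ℝ _

instance : SecondCountableTopology YX := secondCountableTopology_of_induced_coe_eq induced_coe_YX

instance : SecondCountableTopology ZX := secondCountableTopology_of_induced_coe_eq induced_coe_ZX

theorem netWeight_eq : netWeight X = ℵ₀ :=
  le_antisymm (netWeight_le_aleph0_of_union YX_union_ZX) aleph0_le_netWeight

theorem exists_rank : ∃ f : ℝ → ℕ, InjOn f Z := countable_iff_exists_injOn.1 countable_Z

noncomputable def rank : ℝ → ℕ := exists_rank.choose

theorem rank_injOn : InjOn rank Z := exists_rank.choose_spec

def earlier (n : ℕ) : Set X := {w | toReal w ∈ Z ∧ rank (toReal w) < n}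

theorem isClosed_earlier (n : ℕ) : IsClosed (earlier n) := by
  refine (Finite.of_finite_image (f := rank ∘ toReal) ((finite_Iio n).subset ?_) ?_).isClosed
  · rintro _ ⟨w, hw, rfl⟩
    exact hw.2
  · exact fun w hw w' hw' h => toReal_injective (rank_injOn hw.1 hw'.1 h)

def nbhdBase (x : X) : Set (Set X) :=
  {U | ∃ a b : ℚ, toReal x ∈ Ioo (a : ℝ) b ∧
    (toReal x ∈ Y ∧ U = box a b (toReal x) ∨
      Ioo (a : ℝ) b ⊆ Yᶜ ∧ U = toReal ⁻¹' Ioo (a : ℝ) b \ earlier (rank (toReal x)))}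

theorem nbhdBasisAt_nbhdBase (x : X) : NbhdBasisAt (nbhdBase x) x := by
  refine ⟨?_, fun V hV hxV => ?_⟩
  · rintro U ⟨a, b, hx, ⟨-, rfl⟩ | ⟨-, rfl⟩⟩
    · exact ⟨isOpen_box a b _, mem_box_self hx⟩
    · exact ⟨(isOpen_Ioo.preimage continuous_toReal).sdiff (isClosed_earlier _),
        hx, fun h => lt_irrefl _ h.2⟩
  obtain ⟨⟨a, b⟩, hx, hab⟩ := (hasBasis_nhds_box x).mem_iff.1 (hV.mem_nhds hxV)
  by_cases hxY : toReal x ∈ Y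
  · exact ⟨_, ⟨a, b, hx, Or.inl ⟨hxY, rfl⟩⟩, hab⟩
  obtain ⟨a', b', hx', hab'⟩ :=
    exists_rat_Ioo_mem_subset (isOpen_Ioo.sdiff isClosed_Y) ⟨hx, hxY⟩
  refine ⟨_, ⟨a', b', hx', Or.inr ⟨fun t ht => (hab' ht).2, rfl⟩⟩, fun w hw => hab ?_⟩
  rw [box_of_notMem_Y hxY]
  exact (hab' hw.1).1

theorem starProperty_nbhdBase : StarProperty nbhdBase := by
  intro x x' hne U hU V hV hxV hx'U
  obtain ⟨a, b, -, ⟨hxY, rfl⟩ | ⟨hab, rfl⟩⟩ := hU <;>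
    obtain ⟨c, d, -, ⟨hx'Y, rfl⟩ | ⟨hcd, rfl⟩⟩ := hV
  · obtain ⟨z, hz, hzV, hzJ⟩ := exists_mem_Z_inter_J isOpen_Ioo hxV.1 hxY
      (toReal_injective.ne hne) hxV.2
    exact ⟨ofZ hz, hzV, fun h => h.2 hzJ⟩
  · exact absurd hxY (hcd hxV.1)
  · exact absurd hx'Y (hab hx'U.1)
  · -- both points lie in `Z`: the one of smaller rank is removed from the other's neighbourhood
    have hx : toReal x ∈ Z := (toReal_mem x).resolve_left (hcd hxV.1)
    have hx' : toReal x' ∈ Z := (toReal_mem x').resolve_left (hab hx'U.1)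
    rcases lt_trichotomy (rank (toReal x)) (rank (toReal x')) with h | h | h
    · exact absurd ⟨hx, h⟩ hxV.2
    · exact absurd (toReal_injective (rank_injOn hx hx' h)) hne
    · exact absurd ⟨hx', h⟩ hx'U.2

theorem isIrreducibleDecomp_nbhdBase : IsIrreducibleDecomp nbhdBase :=
  starProperty_nbhdBase.isIrreducibleDecomp nbhdBasisAt_nbhdBase

theorem mk_boxes_le : #boxes ≤ 𝔠 :=
  mk_range_le.trans (by simp [mk_real])

/-- A member `O` of the base with `y ∈ O ⊆ X \ J y`, together with a box `box a b y ⊆ O`,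
determines `y ∈ Y`. -/
theorem continuum_le_mk_of_isTopologicalBasis {B : Set (Set X)} (hB : IsTopologicalBasis B) :
    𝔠 ≤ #B := by
  have hO : ∀ y : Y, ∃ O ∈ B, ofY y.2 ∈ O ∧ O ⊆ toReal ⁻¹' (J y)ᶜ ∧
      ∃ p : ℚ × ℚ, (y : ℝ) ∈ Ioo (p.1 : ℝ) p.2 ∧ box p.1 p.2 y ⊆ O := by
    intro y
    obtain ⟨a, b, hy, -⟩ := exists_rat_Ioo_mem_subset isOpen_univ (mem_univ (y : ℝ))
    obtain ⟨O, hOB, hyO, hOab⟩ :=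
      hB.exists_subset_of_mem_open (mem_box_self (x := ofY y.2) hy) (isOpen_box a b _)
    obtain ⟨p, hp, hpO⟩ :=
      (hasBasis_nhds_box (ofY y.2)).mem_iff.1 ((hB.isOpen hOB).mem_nhds hyO)
    exact ⟨O, hOB, hyO, fun w hw => (hOab hw).2, p, hp, hpO⟩
  choose O hOB hyO hOJ p hp hpO using hO
  have hinj : Function.Injective fun y : Y => ((⟨O y, hOB y⟩ : B), p y) := by
    intro y y' h
    simp only [Prod.mk.injEq, Subtype.mk.injEq] at h
    obtain ⟨hOO, hpp⟩ := h
    by_contra hne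
    have hyJ : (y' : ℝ) ∉ J y := hOJ y (hOO ▸ hyO y')
    obtain ⟨z, hz, hzbox, hzJ⟩ := exists_mem_Z_inter_J isOpen_Ioo (hpp ▸ hp y') y'.2
      (fun h => hne (Subtype.ext h.symm)) hyJ
    have hzO : ofZ hz ∈ O y' := hOO ▸ hpO y (a := ofZ hz) hzbox
    exact hOJ y' hzO hzJ
  have hle : 𝔠 ≤ #B * ℵ₀ := by simpa [mk_Y] using mk_le_of_injective hinj
  by_contra hlt
  exact (mul_lt_of_lt aleph0_le_continuum (not_le.1 hlt) aleph0_lt_continuum).not_ge hle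

theorem weight_eq : weight X = 𝔠 :=
  le_antisymm ((weight_le_mk isTopologicalBasis_boxes).trans mk_boxes_le)
    (le_weight fun _ => continuum_le_mk_of_isTopologicalBasis)

end IrreducibleBaseExample

/-- there is a set `X` of irrationals of size `2^ω` and a 0-dimensional
first countable refinement `τ` of the Euclidean topology on `X` such that `X = Y ∪ Z`
with `τ` agreeing with the Euclidean topology on `Y` and on `Z`, and `(X,τ)` has an
irreducible base; consequently `χ(X) = nw(X) = ω` while `w(X) = 2^ω`. -/
theorem statement16 :
    ∃ X : Set ℝ, (∀ x ∈ X, Irrational x) ∧ #X = 2 ^ ℵ₀ ∧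
      ∃ τ : TopologicalSpace X,
        τ ≤ (instTopologicalSpaceSubtype : TopologicalSpace X) ∧
        @FirstCountableTopology X τ ∧
        (∃ B : Set (Set X), @TopologicalSpace.IsTopologicalBasis X τ B ∧
          ∀ U ∈ B, @IsClopen X τ U) ∧
        (∃ Y Z : Set X, Y ∪ Z = Set.univ ∧
          TopologicalSpace.induced ((↑) : Y → X) τ =
            TopologicalSpace.induced ((↑) : Y → X)
              (instTopologicalSpaceSubtype : TopologicalSpace X) ∧
          TopologicalSpace.induced ((↑) : Z → X) τ =
            TopologicalSpace.induced ((↑) : Z → X)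
              (instTopologicalSpaceSubtype : TopologicalSpace X)) ∧
        @HasIrreducibleBase X τ ∧
        @character X τ = ℵ₀ ∧ @netWeight X τ = ℵ₀ ∧ @weight X τ = 2 ^ ℵ₀ := by
  rw [two_power_aleph0]
  open IrreducibleBaseExample in
  exact ⟨Y ∪ Z, fun x hx => irrational_toReal ⟨x, hx⟩, mk_X,
    inferInstanceAs (TopologicalSpace X), le_euclidean, inferInstanceAs (FirstCountableTopology X),
    ⟨boxes, isTopologicalBasis_boxes, fun _ ⟨⟨a, b, r⟩, hU⟩ => hU ▸ isClopen_box a b r⟩,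
    ⟨YX, ZX, YX_union_ZX, induced_coe_YX, induced_coe_ZX⟩,
    ⟨nbhdBase, isIrreducibleDecomp_nbhdBase⟩, character_eq_aleph0 (X := X), netWeight_eq,
    weight_eq⟩
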